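/- arXiv:1611.05219 — 2 statements merged into one kernel-verified Lean document; each statement's English description precedes it below -/
import Mathlib

section
/- Let X and Y be finite sets with |Y| > 1, g : X → Y any map, and k ≥ 1. Let q be a probability distribution on X^{k+1} whose first-k marginal and last-k marginal coincide; call this common k-marginal q_k. Let P be the k-th order Markov approximation of q: P(w,x) = q(w,x)/q_k(w) if q_k(w) > 0, and P(w,x) = 1/|X| otherwise. Let r on Y^{k+1} be the pushforward of q under coordinatewise application of g, with k-marginal r_k, and let Q be the k-th order Markov approximation of r: Q(w,z) = r(w,z)/r_k(w) if r_k(w) > 0, and Q(w,z) = 1/|Y| otherwise. If the Doob lift P^{(k)} of P (a stochastic matrix on X^k) has a single recurrent class, then Q has a unique invariant distribution μ on Y^k (and μ = r_k). -/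
open Finset
open scoped Classical

noncomputable section

/-- The first `k` coordinates of a length-`k+1` tuple. -/
def front {Z : Type*} {k : ℕ} (v : Fin (k + 1) → Z) : Fin k → Z :=
  fun i => v i.castSucc

/-- The last `k` coordinates of a length-`k+1` tuple. -/
def back {Z : Type*} {k : ℕ} (v : Fin (k + 1) → Z) : Fin k → Z :=
  fun i => v i.succ

/-- `p` is a probability distribution on the finite type `α`. -/
def IsProbDist {α : Type*} [Fintype α] (p : α → ℝ) : Prop :=
  (∀ a, 0 ≤ p a) ∧ ∑ a, p a = 1

/-- `Q` is a `k`-th order Markov transition matrix on `Z`. -/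
def IsTransMat {Z : Type*} [Fintype Z] {k : ℕ} (Q : (Fin k → Z) → Z → ℝ) : Prop :=
  (∀ w z, 0 ≤ Q w z) ∧ ∀ w, ∑ z, Q w z = 1

/-- `μ` is an invariant (probability) distribution for the `k`-th order transition matrix `Q`:
`μ(z₁,…,z_k) = ∑_{z₀} μ(z₀,…,z_{k-1}) Q((z₀,…,z_{k-1}), z_k)`. -/
def IsInvariantFor {Z : Type*} [Fintype Z] {k : ℕ} (μ : (Fin k → Z) → ℝ)
    (Q : (Fin k → Z) → Z → ℝ) : Prop :=
  IsProbDist μ ∧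
    ∀ w : Fin k → Z,
      μ w = ∑ z0 : Z,
        μ (front (Fin.cons z0 w)) *
          Q (front (Fin.cons z0 w)) ((Fin.cons z0 w : Fin (k + 1) → Z) (Fin.last k))

/-- `P` is a (first-order) stochastic matrix. -/
def IsStochastic {S : Type*} [Fintype S] (P : Matrix S S ℝ) : Prop :=
  (∀ i j, 0 ≤ P i j) ∧ ∀ i, ∑ j, P i j = 1

/-- State `j` is accessible from state `i` under the stochastic matrix `P`. -/
def Accessible {S : Type*} [Fintype S] (P : Matrix S S ℝ) (i j : S) : Prop :=
  ∃ n : ℕ, 1 ≤ n ∧ 0 < (P ^ n) i j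

/-- State `i` is recurrent for the stochastic matrix `P`. -/
def Recurrent {S : Type*} [Fintype S] (P : Matrix S S ℝ) (i : S) : Prop :=
  ∀ j, Accessible P i j → Accessible P j i

/-- `P` has a single recurrent class. -/
def SingleRecurrentClass {S : Type*} [Fintype S] (P : Matrix S S ℝ) : Prop :=
  (∃ i, Recurrent P i) ∧ ∀ i j, Recurrent P i → Recurrent P j → Accessible P i j

/-- The Doob lift of a `k`-th order transition matrix `Q` on `Z` to a first-order
stochastic matrix on `Z^k`. -/
def doobLift {Z : Type*} {k : ℕ} (Q : (Fin k → Z) → Z → ℝ) (hk : 0 < k) :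
    Matrix (Fin k → Z) (Fin k → Z) ℝ :=
  Matrix.of fun w w' =>
    if ∀ (i : Fin k) (h : (i : ℕ) + 1 < k), w' i = w ⟨(i : ℕ) + 1, h⟩ then
      Q w (w' ⟨k - 1, Nat.sub_lt hk Nat.one_pos⟩)
    else 0

/-- The distribution of a length-`m` block of the process `g(X)`, where `X` is a
stationary Markov chain with transition matrix `P` and (initial) invariant
distribution `π`:
`p_m(y₁,…,y_m) = ∑_{x₁ ∈ g⁻¹(y₁),…,x_m ∈ g⁻¹(y_m)} π(x₁) ∏_{ℓ=2}^m P(x_{ℓ-1}, x_ℓ)`. -/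
def wordDist {X Y : Type*} [Fintype X] (P : Matrix X X ℝ) (π : X → ℝ) (g : X → Y)
    {m : ℕ} (y : Fin m → Y) : ℝ :=
  ∑ x : Fin m → X,
    if ∀ i, g (x i) = y i then
      ∏ i : Fin m,
        if (i : ℕ) = 0 then π (x i)
        else P (x ⟨(i : ℕ) - 1, lt_of_le_of_lt (Nat.sub_le _ _) i.isLt⟩) (x i)
    else 0

/-! An invariant distribution of a finite stochastic matrix is unique as soon as any two recurrent
states are accessible from each other. The `k`-marginal `r_k` is invariant for the Doob lift of
`Q`, and every recurrent state of that lift carries `r_k`-mass: where `r_k` vanishes `Q` is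
uniform, so mass can be reached from everywhere. States of positive `r_k`-mass lift along `g` to
states of positive `q_k`-mass, which are recurrent for the Doob lift of `P` and hence accessible
from each other; and a positive step of that lift out of a state of positive mass maps under `g`
to a positive step of the lift of `Q`. -/

open Relation Matrix

section Markov

variable {S : Type*} [Fintype S] {M : Matrix S S ℝ}

def Transition (M : Matrix S S ℝ) (i j : S) : Prop := 0 < M i j

theorem accessible_iff_transGen (hM : ∀ i j, 0 ≤ M i j) {i j : S} :
    Accessible M i j ↔ TransGen (Transition M) i j := by
  have hpow := pow_apply_nonneg hM
  constructor
  · rintro ⟨n, hn, hpos⟩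
    induction n, hn using Nat.le_induction generalizing j with
    | base => exact .single (by simpa [Transition] using hpos)
    | succ n _ ih =>
      rw [pow_succ, mul_apply] at hpos
      obtain ⟨t, -, ht⟩ :=
        (sum_pos_iff_of_nonneg fun t _ => mul_nonneg (hpow n i t) (hM t j)).1 hpos
      exact .tail (ih (pos_of_mul_pos_left ht (hM t j)))
        (pos_of_mul_pos_right ht (hpow n i t))
  · intro h
    induction h with
    | single h => exact ⟨1, le_rfl, by simpa [Transition] using h⟩
    | tail _ hbc ih =>
      obtain ⟨n, hn, hpos⟩ := ih
      refine ⟨n + 1, by omega, ?_⟩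
      rw [pow_succ, mul_apply]
      exact (sum_pos_iff_of_nonneg fun t _ => mul_nonneg (hpow n _ t) (hM t _)).2
        ⟨_, mem_univ _, mul_pos hpos hbc⟩

variable {μ : S → ℝ}

theorem mul_apply_le_of_vecMul_eq_self (hM : ∀ i j, 0 ≤ M i j) (hμ0 : 0 ≤ μ)
    (hμ : μ ᵥ* M = μ) (i j : S) : μ i * M i j ≤ μ j := by
  conv_rhs => rw [← hμ]
  exact single_le_sum (f := fun t => μ t * M t j)
    (fun t _ => mul_nonneg (hμ0 t) (hM t j)) (mem_univ i)

theorem pos_of_reflTransGen (hM : ∀ i j, 0 ≤ M i j) (hμ0 : 0 ≤ μ) (hμ : μ ᵥ* M = μ)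
    {i j : S} (hij : ReflTransGen (Transition M) i j) (hi : 0 < μ i) : 0 < μ j := by
  induction hij with
  | refl => exact hi
  | tail _ hbc ih =>
    exact (mul_pos ih hbc).trans_le (mul_apply_le_of_vecMul_eq_self hM hμ0 hμ _ _)

theorem mul_apply_eq_zero_of_mem_of_notMem (hM : IsStochastic M) (hμ0 : 0 ≤ μ)
    (hμ : μ ᵥ* M = μ) {B : Finset S} (hin : ∀ j ∉ B, ∀ i ∈ B, M j i = 0) {j i : S}
    (hj : j ∈ B) (hi : i ∉ B) :
    μ j * M j i = 0 := by
  -- The mass of `B` is preserved and nothing flows in, so nothing flows out.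
  have hstay : ∑ j ∈ B, ∑ i ∈ B, μ j * M j i = ∑ j ∈ B, μ j := by
    calc ∑ j ∈ B, ∑ i ∈ B, μ j * M j i = ∑ j, ∑ i ∈ B, μ j * M j i := by
          refine sum_subset (subset_univ B) fun j _ hj => sum_eq_zero fun i hi => ?_
          rw [hin j hj i hi, mul_zero]
      _ = ∑ i ∈ B, (μ ᵥ* M) i := by rw [sum_comm]; rfl
      _ = ∑ j ∈ B, μ j := by rw [hμ]
  have hrow : ∀ j, ∑ i ∈ B, μ j * M j i + ∑ i ∈ Bᶜ, μ j * M j i = μ j := fun j => by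
    rw [sum_add_sum_compl, ← mul_sum, hM.2, mul_one]
  have hout : ∑ j ∈ B, ∑ i ∈ Bᶜ, μ j * M j i = 0 := by
    have := sum_congr rfl fun j (_ : j ∈ B) => hrow j
    rw [sum_add_distrib, hstay] at this
    linarith
  have hnonneg : ∀ j i, 0 ≤ μ j * M j i := fun j i => mul_nonneg (hμ0 j) (hM.1 j i)
  rw [sum_eq_zero_iff_of_nonneg fun j _ => sum_nonneg fun i _ => hnonneg j i] at hout
  exact (sum_eq_zero_iff_of_nonneg fun i _ => hnonneg j i).1 (hout j hj) i (by simpa using hi)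

theorem recurrent_of_pos (hM : IsStochastic M) (hμ0 : 0 ≤ μ) (hμ : μ ᵥ* M = μ) {i : S}
    (hi : 0 < μ i) : Recurrent M i := by
  set B := univ.filter fun j => ReflTransGen (Transition M) j i
  have hin : ∀ j ∉ B, ∀ b ∈ B, M j b = 0 := by
    intro j hj b hb
    refine (hM.1 j b).eq_or_lt.elim Eq.symm fun hjb => absurd ?_ hj
    simp only [B, mem_filter, mem_univ, true_and] at hb ⊢
    exact .head hjb hb
  have hclosed : ∀ l, ReflTransGen (Transition M) i l → 0 < μ l ∧ l ∈ B := by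
    intro l hil
    induction hil with
    | refl => exact ⟨hi, by simp [B, ReflTransGen.refl]⟩
    | @tail l m _ hlm ih =>
      have hm : 0 < μ m :=
        (mul_pos ih.1 hlm).trans_le (mul_apply_le_of_vecMul_eq_self hM.1 hμ0 hμ l m)
      refine ⟨hm, by_contra fun hmB => ?_⟩
      exact (mul_pos ih.1 hlm).ne' (mul_apply_eq_zero_of_mem_of_notMem hM hμ0 hμ hin ih.2 hmB)
  intro l hil
  rw [accessible_iff_transGen hM.1] at hil ⊢
  have hli : ReflTransGen (Transition M) l i := by
    simpa [B] using (hclosed l hil.to_reflTransGen).2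
  exact TransGen.trans_right hli (hil.trans_left hli)

theorem pos_of_recurrent (hM : ∀ i j, 0 ≤ M i j) (hμ0 : 0 ≤ μ) (hμ : μ ᵥ* M = μ)
    {i j : S} (hi : Recurrent M i) (hij : ReflTransGen (Transition M) i j) (hj : 0 < μ j) :
    0 < μ i := by
  rcases reflTransGen_iff_eq_or_transGen.1 hij with rfl | hij
  · exact hj
  have hji := (accessible_iff_transGen hM).1 (hi j ((accessible_iff_transGen hM).2 hij))
  exact pos_of_reflTransGen hM hμ0 hμ hji.to_reflTransGen hj

theorem IsProbDist.exists_pos {μ : S → ℝ} (hμ : IsProbDist μ) : ∃ i, 0 < μ i := by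
  obtain ⟨i, -, hi⟩ :=
    exists_lt_of_sum_lt (by simp [hμ.2] : ∑ _i : S, (0 : ℝ) < ∑ i, μ i)
  exact ⟨i, hi⟩

theorem eq_of_vecMul_eq_self (hM : IsStochastic M)
    (hclass : ∀ i j, Recurrent M i → Recurrent M j → Accessible M i j) {μ ν : S → ℝ}
    (hμ : IsProbDist μ) (hμM : μ ᵥ* M = μ) (hν : IsProbDist ν) (hνM : ν ᵥ* M = ν) :
    μ = ν := by
  -- Subtract the largest multiple `c • ν` lying below `μ`: the rest is invariant and vanishes
  -- at a recurrent state, hence everywhere.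
  obtain ⟨i₀, hi₀, hmin⟩ := exists_min_image (univ.filter fun i => 0 < ν i)
    (fun i => μ i / ν i) (by simpa [Finset.Nonempty] using hν.exists_pos)
  simp only [mem_filter, mem_univ, true_and] at hi₀ hmin
  set c := μ i₀ / ν i₀
  set ρ := μ - c • ν with hρ
  have hρ0 : 0 ≤ ρ := fun i => by
    rcases (hν.1 i).eq_or_lt with h | h
    · simpa [hρ, ← h] using hμ.1 i
    · simpa [hρ, ← le_div_iff₀ h] using hmin i h
  have hρM : ρ ᵥ* M = ρ := by rw [hρ, sub_vecMul, smul_vecMul, hμM, hνM]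
  have hρi₀ : ρ i₀ = 0 := by simp [hρ, c, div_mul_cancel₀ _ hi₀.ne']
  have hρ_zero : ρ = 0 := by
    by_contra! h
    obtain ⟨i, hi⟩ : ∃ i, 0 < ρ i := by
      by_contra! h'
      exact h (funext fun i => (h' i).antisymm (hρ0 i))
    have hacc := hclass i i₀ (recurrent_of_pos hM hρ0 hρM hi)
      (recurrent_of_pos hM hν.1 hνM hi₀)
    rw [accessible_iff_transGen hM.1] at hacc
    exact (pos_of_reflTransGen hM.1 hρ0 hρM hacc.to_reflTransGen hi).ne' hρi₀
  have hμc : μ = c • ν := sub_eq_zero.1 hρ_zero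
  have hc : 1 = c := by simpa [hμ.2, hν.2, ← mul_sum] using congrArg (fun f => ∑ i, f i) hμc
  rw [hμc, ← hc, one_smul]

end Markov

section DoobLift

variable {Z : Type*} {k : ℕ}

@[simp] theorem front_snoc (w : Fin k → Z) (z : Z) :
    front (Fin.snoc w z : Fin (k + 1) → Z) = w :=
  Fin.init_snoc (α := fun _ => Z) z w

@[simp] theorem back_cons (z : Z) (w : Fin k → Z) :
    back (Fin.cons z w : Fin (k + 1) → Z) = w :=
  Fin.tail_cons (α := fun _ => Z) z w

theorem snoc_front_last (v : Fin (k + 1) → Z) : Fin.snoc (front v) (v (Fin.last k)) = v :=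
  Fin.snoc_init_self v

theorem cons_zero_back (v : Fin (k + 1) → Z) : Fin.cons (v 0) (back v) = v :=
  Fin.cons_self_tail v

theorem front_cons_apply_zero (hk : 0 < k) (z : Z) (w : Fin k → Z) :
    front (Fin.cons z w : Fin (k + 1) → Z) ⟨0, hk⟩ = z :=
  Fin.cons_zero (α := fun _ => Z) z w

theorem back_snoc_apply_last (hk : 0 < k) (w : Fin k → Z) (z : Z) :
    back (Fin.snoc w z : Fin (k + 1) → Z) ⟨k - 1, by omega⟩ = z := by
  simp only [back]
  convert Fin.snoc_last (α := fun _ => Z) z w using 2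
  ext; simp; omega

theorem back_snoc_apply_of_lt (w : Fin k → Z) (z : Z) {i : ℕ} (hi : i + 1 < k) :
    back (Fin.snoc w z : Fin (k + 1) → Z) ⟨i, by omega⟩ = w ⟨i + 1, hi⟩ :=
  Fin.snoc_castSucc (α := fun _ => Z) z w ⟨i + 1, hi⟩

variable {Q : (Fin k → Z) → Z → ℝ} (hk : 0 < k)

theorem doobLift_front_back (v : Fin (k + 1) → Z) :
    doobLift Q hk (front v) (back v) = Q (front v) (v (Fin.last k)) := by
  have hlast : back v ⟨k - 1, by omega⟩ = v (Fin.last k) := congrArg v (by ext; simp; omega)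
  rw [doobLift, Matrix.of_apply, if_pos, hlast]
  exact fun _ _ => rfl

theorem exists_front_back_of_doobLift_ne_zero {w w' : Fin k → Z} (h : doobLift Q hk w w' ≠ 0) :
    ∃ v : Fin (k + 1) → Z, front v = w ∧ back v = w' := by
  rw [doobLift, Matrix.of_apply] at h
  split_ifs at h with hshift
  · refine ⟨Fin.snoc w (w' ⟨k - 1, by omega⟩), front_snoc _ _, ?_⟩
    funext ⟨i, hi⟩
    by_cases hlt : i + 1 < k
    · rw [back_snoc_apply_of_lt _ _ hlt, hshift ⟨i, hi⟩ hlt]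
    · obtain rfl : i = k - 1 := by omega
      exact back_snoc_apply_last hk _ _
  · exact absurd rfl h

theorem doobLift_back_snoc (w : Fin k → Z) (z : Z) :
    doobLift Q hk w (back (Fin.snoc w z : Fin (k + 1) → Z)) = Q w z := by
  simpa using doobLift_front_back hk (Q := Q) (Fin.snoc w z)

theorem exists_reflTransGen_doobLift (A : (Fin k → Z) → Prop)
    (hQ : ∀ w, ¬ A w → ∀ z, 0 < Q w z) {t : Fin k → Z} (ht : A t) (u : Fin k → Z) :
    ∃ a, A a ∧ ReflTransGen (Transition (doobLift Q hk)) u a := by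
  -- Outside `A` every letter can be shifted in, so shifting in the letters of `t` one by one
  -- reaches `t` within `k` steps unless `A` is entered earlier.
  suffices h : ∀ m : ℕ, ∀ u : Fin k → Z,
      (∀ i : Fin k, m ≤ (i : ℕ) → u i = t ⟨i - m, by omega⟩) →
      ∃ a, A a ∧ ReflTransGen (Transition (doobLift Q hk)) u a from
    h k u fun i hi => absurd i.2 (by omega)
  intro m
  induction m with
  | zero =>
    intro u hu
    obtain rfl : u = t := funext fun i => hu i (Nat.zero_le _)
    exact ⟨u, ht, .refl⟩
  | succ m ih =>
    intro u hu
    by_cases hA : A u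
    · exact ⟨u, hA, .refl⟩
    set z := t ⟨k - 1 - m, by omega⟩
    have hstep : Transition (doobLift Q hk) u (back (Fin.snoc u z)) := by
      rw [Transition, doobLift_back_snoc]
      exact hQ u hA z
    obtain ⟨a, ha, hua⟩ := ih (back (Fin.snoc u z)) fun ⟨i, hi⟩ him => by
      by_cases hlt : i + 1 < k
      · rw [back_snoc_apply_of_lt _ _ hlt, hu ⟨i + 1, hlt⟩ (by simp at him ⊢; omega)]
        congr 1; ext; simp
      · obtain rfl : i = k - 1 := by omega
        exact back_snoc_apply_last hk _ _
    exact ⟨a, ha, .head hstep hua⟩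

variable [Fintype Z]

theorem sum_doobLift (w : Fin k → Z) : ∑ w', doobLift Q hk w w' = ∑ z, Q w z := by
  refine (Fintype.sum_of_injective (fun z => back (Fin.snoc w z : Fin (k + 1) → Z))
    ?_ _ _ ?_ ?_).symm
  · intro z z' h
    simpa only [back_snoc_apply_last hk] using congrFun h ⟨k - 1, by omega⟩
  · intro w' hw'
    by_contra h
    obtain ⟨v, rfl, rfl⟩ := exists_front_back_of_doobLift_ne_zero hk h
    exact hw' ⟨v (Fin.last k), congrArg back (snoc_front_last v)⟩
  · exact fun z => (doobLift_back_snoc hk w z).symm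

theorem vecMul_doobLift (μ : (Fin k → Z) → ℝ) (u : Fin k → Z) :
    (μ ᵥ* doobLift Q hk) u = ∑ z, μ (front (Fin.cons z u)) *
      Q (front (Fin.cons z u)) ((Fin.cons z u : Fin (k + 1) → Z) (Fin.last k)) := by
  refine (Fintype.sum_of_injective (fun z => front (Fin.cons z u : Fin (k + 1) → Z))
    ?_ _ _ ?_ ?_).symm
  · intro z z' h
    simpa only [front_cons_apply_zero hk] using congrFun h ⟨0, hk⟩
  · intro w hw
    by_cases h : doobLift Q hk w u = 0
    · simp [h]
    obtain ⟨v, rfl, rfl⟩ := exists_front_back_of_doobLift_ne_zero hk h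
    exact absurd ⟨v 0, congrArg front (cons_zero_back v)⟩ hw
  · intro z
    simpa using congrArg (μ (front (Fin.cons z u)) * ·)
      (doobLift_front_back hk (Q := Q) (Fin.cons z u)).symm

theorem isStochastic_doobLift (hQ : IsTransMat Q) : IsStochastic (doobLift Q hk) := by
  refine ⟨fun w w' => ?_, fun w => (sum_doobLift hk w).trans (hQ.2 w)⟩
  rw [doobLift, Matrix.of_apply]
  split_ifs
  exacts [hQ.1 _ _, le_rfl]

theorem isInvariantFor_iff_vecMul_doobLift {μ : (Fin k → Z) → ℝ} :
    IsInvariantFor μ Q ↔ IsProbDist μ ∧ μ ᵥ* doobLift Q hk = μ := by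
  simp only [IsInvariantFor, funext_iff, vecMul_doobLift hk, eq_comm (a := μ _)]

end DoobLift

section Pushforward

variable {α β γ : Type*} [Fintype α]

def pushforward (f : α → β) (p : α → ℝ) (b : β) : ℝ := ∑ a with f a = b, p a

variable {p : α → ℝ}

theorem pushforward_comp [Fintype β] (f : β → γ) (h : α → β) (p : α → ℝ) :
    pushforward (f ∘ h) p = pushforward f (pushforward h p) := by
  funext c
  simp only [pushforward, Function.comp_apply]
  rw [← sum_fiberwise_of_maps_to (g := h) (t := univ.filter fun b => f b = c)
    (fun a ha => by simpa using ha)]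
  refine sum_congr rfl fun b hb => sum_congr ?_ fun _ _ => rfl
  ext a
  simp only [mem_filter, mem_univ, true_and] at hb ⊢
  constructor
  · exact And.right
  · rintro rfl; exact ⟨hb, rfl⟩

theorem sum_pushforward [Fintype β] (f : α → β) (p : α → ℝ) :
    ∑ b, pushforward f p b = ∑ a, p a :=
  sum_fiberwise univ f p

theorem le_pushforward (hp : 0 ≤ p) (f : α → β) (a : α) : p a ≤ pushforward f p (f a) :=
  single_le_sum (fun a _ => hp a) (by simp)

theorem pushforward_nonneg (hp : 0 ≤ p) (f : α → β) : 0 ≤ pushforward f p :=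
  fun _ => sum_nonneg fun a _ => hp a

theorem exists_pos_of_pushforward_pos {f : α → β} {b : β} (h : 0 < pushforward f p b) :
    ∃ a, f a = b ∧ 0 < p a := by
  rw [pushforward] at h
  obtain ⟨a, ha, hpos⟩ := exists_lt_of_sum_lt (f := fun _ => (0 : ℝ)) (by simpa using h)
  exact ⟨a, by simpa using ha, hpos⟩

theorem IsProbDist.pushforward [Fintype β] (hp : IsProbDist p) (f : α → β) :
    IsProbDist (pushforward f p) :=
  ⟨pushforward_nonneg hp.1 f, (sum_pushforward f p).trans hp.2⟩

end Pushforward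

section MarkovApprox

variable {Z : Type*} [Fintype Z] {k : ℕ}

def marginal (p : (Fin (k + 1) → Z) → ℝ) (w : Fin k → Z) : ℝ := ∑ z, p (Fin.snoc w z)

def markovApprox (p : (Fin (k + 1) → Z) → ℝ) (w : Fin k → Z) (z : Z) : ℝ :=
  if 0 < marginal p w then p (Fin.snoc w z) / marginal p w else 1 / (Fintype.card Z : ℝ)

def MarginalsAgree (p : (Fin (k + 1) → Z) → ℝ) : Prop :=
  ∀ w, ∑ z, p (Fin.snoc w z) = ∑ z, p (Fin.cons z w)

variable {p : (Fin (k + 1) → Z) → ℝ}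

theorem marginal_eq_pushforward_front (p : (Fin (k + 1) → Z) → ℝ) :
    marginal p = pushforward front p := by
  funext w
  rw [marginal, pushforward, sum_filter, ← (Fin.snocEquiv fun _ => Z).sum_comp,
    Fintype.sum_prod_type]
  simp [Fin.snocEquiv, front_snoc]

theorem sum_cons_eq_pushforward_back (p : (Fin (k + 1) → Z) → ℝ) :
    (fun w => ∑ z, p (Fin.cons z w)) = pushforward back p := by
  funext w
  rw [pushforward, sum_filter, ← (Fin.consEquiv fun _ => Z).sum_comp, Fintype.sum_prod_type]
  simp [Fin.consEquiv, back_cons]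

theorem marginalsAgree_iff :
    MarginalsAgree p ↔ pushforward front p = pushforward back p := by
  rw [← marginal_eq_pushforward_front, ← sum_cons_eq_pushforward_back, funext_iff]
  rfl

theorem marginal_nonneg (hp : 0 ≤ p) : 0 ≤ marginal p :=
  fun _ => sum_nonneg fun _ _ => hp _

theorem le_marginal_front (hp : 0 ≤ p) (v : Fin (k + 1) → Z) :
    p v ≤ marginal p (front v) := by
  rw [marginal_eq_pushforward_front]
  exact le_pushforward hp front v

theorem le_marginal_back (hp : 0 ≤ p) (hstat : MarginalsAgree p) (v : Fin (k + 1) → Z) :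
    p v ≤ marginal p (back v) := by
  rw [marginal_eq_pushforward_front, marginalsAgree_iff.1 hstat]
  exact le_pushforward hp back v

theorem marginal_mul_markovApprox (hp : 0 ≤ p) (v : Fin (k + 1) → Z) :
    marginal p (front v) * markovApprox p (front v) (v (Fin.last k)) = p v := by
  rw [markovApprox]
  split_ifs with h
  · rw [snoc_front_last, mul_div_cancel₀ _ h.ne']
  · have h0 : marginal p (front v) = 0 := (not_lt.1 h).antisymm (marginal_nonneg hp _)
    rw [h0, zero_mul]
    exact ((h0 ▸ le_marginal_front hp v).antisymm (hp v)).symm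

theorem markovApprox_pos (hp : 0 ≤ p) {v : Fin (k + 1) → Z} (hv : 0 < p v) :
    0 < markovApprox p (front v) (v (Fin.last k)) :=
  pos_of_mul_pos_right ((marginal_mul_markovApprox hp v).symm ▸ hv) (marginal_nonneg hp _)

theorem pos_of_markovApprox_pos (hp : 0 ≤ p) {v : Fin (k + 1) → Z}
    (hv : 0 < marginal p (front v)) (h : 0 < markovApprox p (front v) (v (Fin.last k))) :
    0 < p v :=
  marginal_mul_markovApprox hp v ▸ mul_pos hv h

theorem markovApprox_pos_of_not_pos {w : Fin k → Z} (hw : ¬ 0 < marginal p w) (z : Z) :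
    0 < markovApprox p w z := by
  have : 0 < Fintype.card Z := Fintype.card_pos_iff.2 ⟨z⟩
  rw [markovApprox, if_neg hw]
  positivity

theorem isTransMat_markovApprox (hp : IsProbDist p) : IsTransMat (markovApprox p) := by
  refine ⟨fun w z => ?_, fun w => ?_⟩
  · rw [markovApprox]
    split_ifs with h
    exacts [div_nonneg (hp.1 _) h.le, by positivity]
  · obtain ⟨v, -⟩ := hp.exists_pos
    have : 0 < Fintype.card Z := Fintype.card_pos_iff.2 ⟨v 0⟩
    by_cases h : 0 < marginal p w
    · simp only [markovApprox, if_pos h, ← sum_div]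
      exact div_self h.ne'
    · simp only [markovApprox, if_neg h, sum_const, card_univ, nsmul_eq_mul]
      field_simp

theorem isInvariantFor_marginal (hp : IsProbDist p) (hstat : MarginalsAgree p) :
    IsInvariantFor (marginal p) (markovApprox p) := by
  refine ⟨⟨marginal_nonneg hp.1, ?_⟩, fun w => ?_⟩
  · rw [marginal_eq_pushforward_front, sum_pushforward, hp.2]
  · simp only [marginal_mul_markovApprox hp.1]
    exact hstat w

end MarkovApprox

section Lumping

variable {X Y : Type*} [Fintype X] [Fintype Y] {k : ℕ} (g : X → Y)

theorem marginal_pushforward_comp (p : (Fin (k + 1) → X) → ℝ) :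
    marginal (pushforward (g ∘ ·) p) = pushforward (g ∘ ·) (marginal p) := by
  rw [marginal_eq_pushforward_front, marginal_eq_pushforward_front, ← pushforward_comp,
    ← pushforward_comp]
  rfl

theorem MarginalsAgree.pushforward_comp {p : (Fin (k + 1) → X) → ℝ} (hp : MarginalsAgree p) :
    MarginalsAgree (pushforward (g ∘ ·) p) := by
  rw [marginalsAgree_iff] at hp ⊢
  rw [← _root_.pushforward_comp, ← _root_.pushforward_comp]
  change pushforward ((g ∘ ·) ∘ front) p = pushforward ((g ∘ ·) ∘ back) p
  rw [_root_.pushforward_comp, _root_.pushforward_comp, hp]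

variable {q : (Fin (k + 1) → X) → ℝ} (hk : 0 < k)

theorem transition_doobLift_pushforward_comp (hq : IsProbDist q) (hstat : MarginalsAgree q)
    {w w' : Fin k → X} (hw : 0 < marginal q w)
    (h : Transition (doobLift (markovApprox q) hk) w w') :
    0 < marginal q w' ∧
      Transition (doobLift (markovApprox (pushforward (g ∘ ·) q)) hk) (g ∘ w) (g ∘ w') := by
  obtain ⟨v, rfl, rfl⟩ := exists_front_back_of_doobLift_ne_zero hk h.ne'
  rw [Transition, doobLift_front_back] at h
  have hv : 0 < q v := pos_of_markovApprox_pos hq.1 hw h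
  refine ⟨hv.trans_le (le_marginal_back hq.1 hstat v), ?_⟩
  change 0 < doobLift _ hk (front (g ∘ v)) (back (g ∘ v))
  rw [doobLift_front_back]
  exact markovApprox_pos (pushforward_nonneg hq.1 _) (hv.trans_le (le_pushforward hq.1 _ v))

theorem transGen_doobLift_pushforward_comp (hq : IsProbDist q) (hstat : MarginalsAgree q)
    {w w' : Fin k → X} (hw : 0 < marginal q w)
    (h : TransGen (Transition (doobLift (markovApprox q) hk)) w w') :
    TransGen (Transition (doobLift (markovApprox (pushforward (g ∘ ·) q)) hk))
      (g ∘ w) (g ∘ w') := by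
  induction h using TransGen.head_induction_on with
  | single h => exact .single (transition_doobLift_pushforward_comp g hk hq hstat hw h).2
  | head h _ ih =>
    obtain ⟨hb, hstep⟩ := transition_doobLift_pushforward_comp g hk hq hstat hw h
    exact .head hstep (ih hb)

theorem accessible_doobLift_pushforward_comp (hq : IsProbDist q) (hstat : MarginalsAgree q)
    (hrec : SingleRecurrentClass (doobLift (markovApprox q) hk)) (u u' : Fin k → Y)
    (hu : Recurrent (doobLift (markovApprox (pushforward (g ∘ ·) q)) hk) u)
    (hu' : Recurrent (doobLift (markovApprox (pushforward (g ∘ ·) q)) hk) u') :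
    Accessible (doobLift (markovApprox (pushforward (g ∘ ·) q)) hk) u u' := by
  set r := pushforward (g ∘ ·) q
  have hr : IsProbDist r := hq.pushforward _
  have hP := isStochastic_doobLift hk (isTransMat_markovApprox hq)
  have hQ := isStochastic_doobLift hk (isTransMat_markovApprox hr)
  have hinvq := ((isInvariantFor_iff_vecMul_doobLift hk).1 (isInvariantFor_marginal hq hstat)).2
  have hinvr := ((isInvariantFor_iff_vecMul_doobLift hk).1
    (isInvariantFor_marginal hr (hstat.pushforward_comp g))).2
  have hlift : ∀ u, Recurrent (doobLift (markovApprox r) hk) u →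
      ∃ w, g ∘ w = u ∧ 0 < marginal q w := by
    intro u hu
    obtain ⟨t, ht⟩ := (isInvariantFor_marginal hr (hstat.pushforward_comp g)).1.exists_pos
    obtain ⟨a, ha, hua⟩ := exists_reflTransGen_doobLift hk (0 < marginal r ·)
      (fun w hw z => markovApprox_pos_of_not_pos hw z) ht u
    have hu_pos := pos_of_recurrent hQ.1 (marginal_nonneg hr.1) hinvr hu hua ha
    rw [marginal_pushforward_comp] at hu_pos
    exact exists_pos_of_pushforward_pos hu_pos
  obtain ⟨w, rfl, hw⟩ := hlift u hu
  obtain ⟨w', rfl, hw'⟩ := hlift u' hu'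
  have hacc := hrec.2 w w' (recurrent_of_pos hP (marginal_nonneg hq.1) hinvq hw)
    (recurrent_of_pos hP (marginal_nonneg hq.1) hinvq hw')
  rw [accessible_iff_transGen hP.1] at hacc
  rw [accessible_iff_transGen hQ.1]
  exact transGen_doobLift_pushforward_comp g hk hq hstat hw hacc

end Lumping

theorem unique_invariant_of_nonmarkov_lumping_general
    {X Y : Type*} [Fintype X] [Fintype Y]
    (g : X → Y) (k : ℕ) (hk : 1 ≤ k)
    (q : (Fin (k + 1) → X) → ℝ) (hq : IsProbDist q)
    (hstat : ∀ w : Fin k → X, ∑ x, q (Fin.snoc w x) = ∑ x, q (Fin.cons x w))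
    (qk : (Fin k → X) → ℝ) (hqk : ∀ w, qk w = ∑ x, q (Fin.snoc w x))
    (P : (Fin k → X) → X → ℝ)
    (hP : ∀ (w : Fin k → X) (x : X), P w x =
      if 0 < qk w then q (Fin.snoc w x) / qk w else 1 / (Fintype.card X : ℝ))
    (r : (Fin (k + 1) → Y) → ℝ)
    (hr : ∀ u : Fin (k + 1) → Y,
      r u = ∑ v : Fin (k + 1) → X, if ∀ i, g (v i) = u i then q v else 0)
    (rk : (Fin k → Y) → ℝ) (hrk : ∀ w, rk w = ∑ z, r (Fin.snoc w z))
    (Q : (Fin k → Y) → Y → ℝ)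
    (hQ : ∀ (w : Fin k → Y) (z : Y), Q w z =
      if 0 < rk w then r (Fin.snoc w z) / rk w else 1 / (Fintype.card Y : ℝ))
    (hrec : SingleRecurrentClass (doobLift P hk)) :
    (∃! μ : (Fin k → Y) → ℝ, IsInvariantFor μ Q) ∧
      ∀ μ : (Fin k → Y) → ℝ, IsInvariantFor μ Q → μ = fun w => rk w := by
  obtain rfl : qk = marginal q := funext hqk
  obtain rfl : P = markovApprox q := funext₂ hP
  obtain rfl : rk = marginal r := funext hrk
  obtain rfl : Q = markovApprox r := funext₂ hQ
  obtain rfl : r = pushforward (g ∘ ·) q := funext fun u => by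
    rw [hr, pushforward, sum_filter]
    simp only [funext_iff, Function.comp_apply]
  set r := pushforward (g ∘ ·) q
  have hr : IsProbDist r := hq.pushforward _
  have hinv := isInvariantFor_marginal hr (MarginalsAgree.pushforward_comp g hstat)
  have hunique : ∀ μ, IsInvariantFor μ (markovApprox r) → μ = marginal r := by
    intro μ hμ
    rw [isInvariantFor_iff_vecMul_doobLift hk] at hμ hinv
    exact eq_of_vecMul_eq_self (isStochastic_doobLift hk (isTransMat_markovApprox hr))
      (accessible_doobLift_pushforward_comp g hk hq hstat hrec) hμ.1 hμ.2 hinv.1 hinv.2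
  exact ⟨⟨_, hinv, hunique⟩, hunique⟩

/-- Let `q` be a stationary distribution on `X^{k+1}` whose `k`-th order
Markov approximation `P` has a Doob lift with a single recurrent class. Then the `k`-th
order Markov approximation `Q` of the pushforward `r` of `q` under a map `g : X → Y` has a
unique invariant distribution on `Y^k`, namely the `k`-marginal `r_k`. -/
theorem unique_invariant_of_nonmarkov_lumping
    {X Y : Type*} [Fintype X] [Fintype Y]
    (hY : 1 < Fintype.card Y) (g : X → Y) (k : ℕ) (hk : 1 ≤ k)
    (q : (Fin (k + 1) → X) → ℝ) (hq : IsProbDist q)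
    (hstat : ∀ w : Fin k → X, ∑ x, q (Fin.snoc w x) = ∑ x, q (Fin.cons x w))
    (qk : (Fin k → X) → ℝ) (hqk : ∀ w, qk w = ∑ x, q (Fin.snoc w x))
    (P : (Fin k → X) → X → ℝ)
    (hP : ∀ (w : Fin k → X) (x : X), P w x =
      if 0 < qk w then q (Fin.snoc w x) / qk w else 1 / (Fintype.card X : ℝ))
    (r : (Fin (k + 1) → Y) → ℝ)
    (hr : ∀ u : Fin (k + 1) → Y,
      r u = ∑ v : Fin (k + 1) → X, if ∀ i, g (v i) = u i then q v else 0)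
    (rk : (Fin k → Y) → ℝ) (hrk : ∀ w, rk w = ∑ z, r (Fin.snoc w z))
    (Q : (Fin k → Y) → Y → ℝ)
    (hQ : ∀ (w : Fin k → Y) (z : Y), Q w z =
      if 0 < rk w then r (Fin.snoc w z) / rk w else 1 / (Fintype.card Y : ℝ))
    (hrec : SingleRecurrentClass (doobLift P hk)) :
    (∃! μ : (Fin k → Y) → ℝ, IsInvariantFor μ Q) ∧
      ∀ μ : (Fin k → Y) → ℝ, IsInvariantFor μ Q → μ = fun w => rk w :=
  unique_invariant_of_nonmarkov_lumping_general g k hk q hq hstat qk hqk P hP r hr rk hrk Q hQ hrec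
end
end

section
/- Let X be a finite set, P a stochastic matrix on X (entries ≥ 0, rows summing to 1) with a single recurrent class, and π an invariant distribution of P. Let Y be a finite set with |Y| > 1 and g : X → Y any map. For n ≥ 1 define p_n on Y^n by p_n(y_1,…,y_n) = Σ_{x_1 ∈ g^{-1}(y_1), …, x_n ∈ g^{-1}(y_n)} π(x_1) ∏_{ℓ=2}^{n} P(x_{ℓ-1}, x_ℓ). Fix k ≥ 1, let Q(w,z) = p_{k+1}(w,z)/p_k(w) if p_k(w) > 0 and Q(w,z) = 1/|Y| otherwise, let P_Q be the Doob lift of Q on Y^k, and let S = {w ∈ Y^k : p_k(w) > 0}. Then every state outside S reaches S within k steps: for every w ∈ Y^k \ S there exist w' ∈ S and n with 1 ≤ n ≤ k such that ((P_Q)^n)(w, w') > 0. Consequently every state in Y^k \ S is transient for P_Q. -/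
open Finset
open scoped Classical

noncomputable section

lemma exists_pos_of_sum_pos {ι : Type*} [Fintype ι] {f : ι → ℝ} (h : 0 < ∑ i, f i) :
    ∃ i, 0 < f i := by
  by_contra hc; push_neg at hc
  exact absurd (Finset.sum_nonpos fun i _ => hc i) (not_le.mpr h)

lemma factor_pos {ι : Type*} [Fintype ι] {f : ι → ℝ} (h0 : ∀ i, 0 ≤ f i)
    (h : 0 < ∏ i, f i) (j : ι) : 0 < f j :=
  (h0 j).lt_of_ne fun e =>
    absurd (Finset.prod_eq_zero (Finset.mem_univ j) e.symm) (by intro hz; rw [hz] at h; exact lt_irrefl 0 h)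

lemma wordDist_term_nonneg {X Y : Type*} [Fintype X] (P : Matrix X X ℝ)
    (hP0 : ∀ i j, 0 ≤ P i j) (π : X → ℝ) (hπ0 : ∀ a, 0 ≤ π a) (g : X → Y) {m : ℕ}
    (y : Fin m → Y) (x : Fin m → X) :
    (0:ℝ) ≤ if ∀ i, g (x i) = y i then
      ∏ i : Fin m,
        if (i : ℕ) = 0 then π (x i)
        else P (x ⟨(i : ℕ) - 1, lt_of_le_of_lt (Nat.sub_le _ _) i.isLt⟩) (x i)
    else 0 := by
  split
  · apply Finset.prod_nonneg; intro i _; split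
    · exact hπ0 _
    · exact hP0 _ _
  · exact le_rfl

lemma wordDist_nonneg {X Y : Type*} [Fintype X] [Fintype Y] (P : Matrix X X ℝ)
    (hP0 : ∀ i j, 0 ≤ P i j) (π : X → ℝ) (hπ0 : ∀ a, 0 ≤ π a) (g : X → Y) {m : ℕ}
    (y : Fin m → Y) : 0 ≤ wordDist P π g y :=
  Finset.sum_nonneg fun x _ => wordDist_term_nonneg P hP0 π hπ0 g y x

lemma exists_pos_word {X Y : Type*} [Fintype X] [Fintype Y] (P : Matrix X X ℝ)
    (hP : IsStochastic P) (π : X → ℝ) (hπ : IsProbDist π) (g : X → Y) (m : ℕ) :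
    ∃ w : Fin m → Y, 0 < wordDist P π g w := by
  obtain ⟨x0, hx0⟩ : ∃ x0, 0 < π x0 := by
    apply exists_pos_of_sum_pos; rw [hπ.2]; exact one_pos
  have hrow : ∀ a : X, ∃ b, 0 < P a b := fun a => by
    apply exists_pos_of_sum_pos; rw [hP.2 a]; exact one_pos
  choose nxt hnxt using hrow
  let x : ℕ → X := fun n => Nat.rec x0 (fun _ a => nxt a) n
  refine ⟨fun i => g (x i), ?_⟩
  have key : (0:ℝ) < ∏ i : Fin m,
      if (i : ℕ) = 0 then π (x i)
      else P (x ((⟨(i : ℕ) - 1, lt_of_le_of_lt (Nat.sub_le _ _) i.isLt⟩ : Fin m) : ℕ)) (x i) := by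
    apply Finset.prod_pos
    intro i _
    split
    · next h => rw [h]; exact hx0
    · next h =>
      have : (i:ℕ) = ((i:ℕ) - 1) + 1 := by omega
      rw [show x (i:ℕ) = nxt (x ((i:ℕ)-1)) by rw [this]; rfl]
      exact hnxt _
  calc (0:ℝ) < _ := key
    _ ≤ wordDist P π g (fun i => g (x i)) := by
        unfold wordDist
        have := Finset.single_le_sum
          (f := fun x' : Fin m → X =>
            if ∀ i, g (x' i) = g (x i) then
              ∏ i : Fin m,
                if (i : ℕ) = 0 then π (x' i)
                else P (x' ⟨(i : ℕ) - 1, lt_of_le_of_lt (Nat.sub_le _ _) i.isLt⟩) (x' i)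
            else 0)
          (fun x' _ => wordDist_term_nonneg P hP.1 π hπ.1 g _ x')
          (Finset.mem_univ (fun i : Fin m => x (i:ℕ)))
        simpa using this

lemma back_pos {X Y : Type*} [Fintype X] [Fintype Y] (P : Matrix X X ℝ)
    (hP : IsStochastic P) (π : X → ℝ) (hπ0 : ∀ a, 0 ≤ π a)
    (hπinv : ∀ j, ∑ i, π i * P i j = π j) (g : X → Y) {m : ℕ} (y : Fin (m+1) → Y)
    (h : 0 < wordDist P π g y) : 0 < wordDist P π g (back y) := by
  unfold wordDist at h
  obtain ⟨x, hx⟩ := exists_pos_of_sum_pos h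
  by_cases hg : ∀ i, g (x i) = y i
  swap
  · rw [if_neg hg] at hx; exact absurd hx (lt_irrefl 0)
  rw [if_pos hg] at hx
  set F : Fin (m+1) → ℝ := fun i =>
    if (i : ℕ) = 0 then π (x i)
    else P (x ⟨(i : ℕ) - 1, lt_of_le_of_lt (Nat.sub_le _ _) i.isLt⟩) (x i) with hF
  have hF0 : ∀ i, 0 ≤ F i := by
    intro i; rw [hF]; dsimp only; split
    · exact hπ0 _
    · exact hP.1 _ _
  have hfac : ∀ j, 0 < F j := factor_pos hF0 hx
  -- the term at `back x` is positive
  have hterm : (0:ℝ) < ∏ i : Fin m,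
      if (i : ℕ) = 0 then π (back x i)
      else P (back x ⟨(i : ℕ) - 1, lt_of_le_of_lt (Nat.sub_le _ _) i.isLt⟩) (back x i) := by
    apply Finset.prod_pos
    intro i _
    split
    · next hi =>
      -- back x i = x i.succ, with (i.succ : ℕ) = 1
      have h1 : 0 < π (x 0) := by
        have := hfac 0
        rw [hF] at this; simpa using this
      have h2 : 0 < P (x 0) (x i.succ) := by
        have := hfac i.succ
        rw [hF] at this; dsimp only at this
        rw [if_neg (by simp [Fin.val_succ])] at this
        have e : (⟨((i.succ : ℕ)) - 1, lt_of_le_of_lt (Nat.sub_le _ _) i.succ.isLt⟩ : Fin (m+1)) = 0 := by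
          apply Fin.ext; simp [Fin.val_succ, hi]
        rwa [e] at this
      calc (0:ℝ) < π (x 0) * P (x 0) (x i.succ) := mul_pos h1 h2
        _ ≤ ∑ a, π a * P a (x i.succ) :=
            Finset.single_le_sum (fun a _ => mul_nonneg (hπ0 a) (hP.1 a _)) (Finset.mem_univ (x 0))
        _ = π (x i.succ) := hπinv _
        _ = π (back x i) := rfl
    · next hi =>
      have := hfac i.succ
      rw [hF] at this; dsimp only at this
      rw [if_neg (by simp [Fin.val_succ])] at this
      have e : (⟨((i.succ : ℕ)) - 1, lt_of_le_of_lt (Nat.sub_le _ _) i.succ.isLt⟩ : Fin (m+1))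
          = (⟨(i:ℕ)-1, lt_of_le_of_lt (Nat.sub_le _ _) i.isLt⟩ : Fin m).succ := by
        apply Fin.ext; simp [Fin.val_succ]; omega
      rw [e] at this
      exact this
  calc (0:ℝ) < _ := hterm
    _ ≤ wordDist P π g (back y) := by
        unfold wordDist
        have hcond : ∀ i, g (back x i) = back y i := fun i => hg i.succ
        have := Finset.single_le_sum
          (f := fun x' : Fin m → X =>
            if ∀ i, g (x' i) = back y i then
              ∏ i : Fin m,
                if (i : ℕ) = 0 then π (x' i)
                else P (x' ⟨(i : ℕ) - 1, lt_of_le_of_lt (Nat.sub_le _ _) i.isLt⟩) (x' i)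
            else 0)
          (fun x' _ => wordDist_term_nonneg P hP.1 π hπ0 g _ x')
          (Finset.mem_univ (back x))
        rw [if_pos hcond] at this
        exact this

lemma pow_entry_nonneg {S : Type*} [Fintype S] [DecidableEq S] {M : Matrix S S ℝ}
    (h0 : ∀ i j, 0 ≤ M i j) (n : ℕ) : ∀ i j, 0 ≤ (M ^ n) i j := by
  induction n with
  | zero =>
    intro i j; rw [pow_zero]
    by_cases h : i = j <;> simp [Matrix.one_apply, h]
  | succ n ih =>
    intro i j; rw [pow_succ, Matrix.mul_apply]
    exact Finset.sum_nonneg fun b _ => mul_nonneg (ih i b) (h0 b j)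

lemma pow_entry_step {S : Type*} [Fintype S] [DecidableEq S] {M : Matrix S S ℝ}
    (h0 : ∀ i j, 0 ≤ M i j) {n : ℕ} {a b c : S}
    (h1 : 0 < (M ^ n) a b) (h2 : 0 < M b c) : 0 < (M ^ (n+1)) a c := by
  rw [pow_succ, Matrix.mul_apply]
  exact lt_of_lt_of_le (mul_pos h1 h2)
    (Finset.single_le_sum
      (fun x _ => mul_nonneg (pow_entry_nonneg h0 n a x) (h0 x c)) (Finset.mem_univ b))

lemma pow_entry_exists {S : Type*} [Fintype S] [DecidableEq S] {M : Matrix S S ℝ}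
    (h0 : ∀ i j, 0 ≤ M i j) {n : ℕ} {a c : S}
    (h : 0 < (M ^ (n+1)) a c) : ∃ b, 0 < (M ^ n) a b ∧ 0 < M b c := by
  rw [pow_succ, Matrix.mul_apply] at h
  obtain ⟨b, hb⟩ := exists_pos_of_sum_pos h
  rcases mul_pos_iff.mp hb with ⟨h1, h2⟩ | ⟨h1, _⟩
  · exact ⟨b, h1, h2⟩
  · exact absurd (pow_entry_nonneg h0 n a b) (not_le.mpr h1)


section main
variable {X Y : Type*} [Fintype X] [Fintype Y]
  (P : Matrix X X ℝ) (π : X → ℝ) (g : X → Y) {k : ℕ}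
  (Q : (Fin k → Y) → Y → ℝ) (hk : 0 < k)

lemma Q_nonneg (hP : IsStochastic P) (hπ0 : ∀ a, 0 ≤ π a)
    (hQ : ∀ (w : Fin k → Y) (z : Y), Q w z =
      if 0 < wordDist P π g w then wordDist P π g (Fin.snoc w z) / wordDist P π g w
      else 1 / (Fintype.card Y : ℝ)) (w : Fin k → Y) (z : Y) : 0 ≤ Q w z := by
  rw [hQ]
  split
  · exact div_nonneg (wordDist_nonneg P hP.1 π hπ0 g _) (wordDist_nonneg P hP.1 π hπ0 g _)
  · positivity

lemma doob_nonneg (hP : IsStochastic P) (hπ0 : ∀ a, 0 ≤ π a)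
    (hQ : ∀ (w : Fin k → Y) (z : Y), Q w z =
      if 0 < wordDist P π g w then wordDist P π g (Fin.snoc w z) / wordDist P π g w
      else 1 / (Fintype.card Y : ℝ)) (u v : Fin k → Y) : 0 ≤ doobLift Q hk u v := by
  unfold doobLift
  rw [Matrix.of_apply]
  split
  · exact Q_nonneg P π g Q hP hπ0 hQ _ _
  · exact le_rfl

lemma doob_step_pos (hP : IsStochastic P) (hπ0 : ∀ a, 0 ≤ π a)
    (hπinv : ∀ j, ∑ i, π i * P i j = π j)
    (hQ : ∀ (w : Fin k → Y) (z : Y), Q w z =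
      if 0 < wordDist P π g w then wordDist P π g (Fin.snoc w z) / wordDist P π g w
      else 1 / (Fintype.card Y : ℝ))
    {u v : Fin k → Y} (hu : 0 < wordDist P π g u) (h : 0 < doobLift Q hk u v) :
    0 < wordDist P π g v := by
  unfold doobLift at h
  rw [Matrix.of_apply] at h
  by_cases hcond : ∀ (i : Fin k) (hik : (i : ℕ) + 1 < k), v i = u ⟨(i : ℕ) + 1, hik⟩
  swap
  · rw [if_neg hcond] at h; exact absurd h (lt_irrefl 0)
  rw [if_pos hcond, hQ, if_pos hu] at h
  set z := v ⟨k - 1, Nat.sub_lt hk Nat.one_pos⟩ with hz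
  have hnum : 0 < wordDist P π g (Fin.snoc u z) := by
    have := mul_pos h hu
    rwa [div_mul_cancel₀ _ (ne_of_gt hu)] at this
  have hb := back_pos P hP π hπ0 hπinv g _ hnum
  have he : back (Fin.snoc u z) = v := by
    funext i
    simp only [back]
    by_cases h2 : (i : ℕ) + 1 < k
    · have e : i.succ = Fin.castSucc (⟨(i : ℕ) + 1, h2⟩ : Fin k) := Fin.ext rfl
      rw [e, Fin.snoc_castSucc]
      exact (hcond i h2).symm
    · have hik : (i : ℕ) = k - 1 := by have := i.isLt; omega
      have e : i.succ = Fin.last k := Fin.ext (by simp [Fin.val_succ]; omega)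
      rw [e, Fin.snoc_last, hz]
      congr 1
      exact Fin.ext (by simp [hik])
  rwa [he] at hb

lemma reach_pos (hP : IsStochastic P) (hπ0 : ∀ a, 0 ≤ π a)
    (hπinv : ∀ j, ∑ i, π i * P i j = π j)
    (hQ : ∀ (w : Fin k → Y) (z : Y), Q w z =
      if 0 < wordDist P π g w then wordDist P π g (Fin.snoc w z) / wordDist P π g w
      else 1 / (Fintype.card Y : ℝ))
    (m : ℕ) : ∀ u v : Fin k → Y, 0 < wordDist P π g u →
      0 < ((doobLift Q hk) ^ m) u v → 0 < wordDist P π g v := by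
  induction m with
  | zero =>
    intro u v hu h
    rw [pow_zero] at h
    by_cases e : u = v
    · rwa [← e]
    · rw [Matrix.one_apply_ne e] at h; exact absurd h (lt_irrefl 0)
  | succ m ih =>
    intro u v hu h
    obtain ⟨b, h1, h2⟩ := pow_entry_exists (doob_nonneg P π g Q hk hP hπ0 hQ) h
    exact doob_step_pos P π g Q hk hP hπ0 hπinv hQ (ih u b hu h1) h2

end main

/-- states outside `S` are transient. With `Q` the `k`-th order Markov
approximation of the lumped process `g(X)` and `P_Q` its Doob lift on `Y^k`, every state
outside `S = {w : p_k(w) > 0}` reaches `S` within `k` steps; consequently every state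
outside `S` is transient. -/
theorem nonpositive_states_transient
    {X Y : Type*} [Fintype X] [Fintype Y]
    (P : Matrix X X ℝ) (hP : IsStochastic P) (hrec : SingleRecurrentClass P)
    (π : X → ℝ) (hπ : IsProbDist π) (hπinv : ∀ j, ∑ i, π i * P i j = π j)
    (hY : 1 < Fintype.card Y) (g : X → Y)
    (k : ℕ) (hk : 1 ≤ k)
    (Q : (Fin k → Y) → Y → ℝ)
    (hQ : ∀ (w : Fin k → Y) (z : Y), Q w z =
      if 0 < wordDist P π g w then wordDist P π g (Fin.snoc w z) / wordDist P π g w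
      else 1 / (Fintype.card Y : ℝ)) :
    (∀ w : Fin k → Y, ¬ 0 < wordDist P π g w →
      ∃ (w' : Fin k → Y) (n : ℕ), 0 < wordDist P π g w' ∧ 1 ≤ n ∧ n ≤ k ∧
        0 < ((doobLift Q hk) ^ n) w w') ∧
    ∀ w : Fin k → Y, ¬ 0 < wordDist P π g w → ¬ Recurrent (doobLift Q hk) w := by

  have hM0 : ∀ u v, 0 ≤ doobLift Q hk u v := doob_nonneg P π g Q hk hP hπ.1 hQ
  have part1 : ∀ w : Fin k → Y, ¬ 0 < wordDist P π g w →
      ∃ (w' : Fin k → Y) (n : ℕ), 0 < wordDist P π g w' ∧ 1 ≤ n ∧ n ≤ k ∧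
        0 < ((doobLift Q hk) ^ n) w w' := by
    intro w hw
    obtain ⟨w', hw'⟩ := exists_pos_word P hP π hπ g k
    set s : ℕ → Fin k → Y := fun j i =>
      if h : (i : ℕ) + j < k then w ⟨(i : ℕ) + j, h⟩
      else if h2 : (i : ℕ) + j - k < k then w' ⟨(i : ℕ) + j - k, h2⟩ else w' i with hs
    have hs0 : s 0 = w := by
      funext i; rw [hs]; dsimp only
      rw [dif_pos (show (i : ℕ) + 0 < k by have := i.isLt; omega)]
      exact congrArg w (Fin.ext (show (i : ℕ) + 0 = (i : ℕ) by omega))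
    have hsk : s k = w' := by
      funext i; rw [hs]; dsimp only
      rw [dif_neg (by omega), dif_pos (show (i : ℕ) + k - k < k by have := i.isLt; omega)]
      exact congrArg w' (Fin.ext (show (i : ℕ) + k - k = (i : ℕ) by omega))
    have hstep : ∀ j, j < k → ¬ 0 < wordDist P π g (s j) →
        0 < doobLift Q hk (s j) (s (j + 1)) := by
      intro j hj hsj
      have hcond : ∀ (i : Fin k) (h : (i : ℕ) + 1 < k),
          s (j + 1) i = s j ⟨(i : ℕ) + 1, h⟩ := by
        intro i h
        rw [hs]; dsimp only
        by_cases hc : (i : ℕ) + (j + 1) < k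
        · rw [dif_pos hc, dif_pos (show (i : ℕ) + 1 + j < k by omega)]
          exact congrArg w (Fin.ext (show (i : ℕ) + (j + 1) = (i : ℕ) + 1 + j by omega))
        · rw [dif_neg hc, dif_neg (show ¬((i : ℕ) + 1 + j < k) by omega),
              dif_pos (show (i : ℕ) + (j + 1) - k < k by have := i.isLt; omega),
              dif_pos (show (i : ℕ) + 1 + j - k < k by have := i.isLt; omega)]
          exact congrArg w' (Fin.ext (show (i : ℕ) + (j + 1) - k = (i : ℕ) + 1 + j - k by omega))
      have hd : doobLift Q hk (s j) (s (j + 1))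
          = Q (s j) (s (j + 1) ⟨k - 1, Nat.sub_lt hk Nat.one_pos⟩) := by
        unfold doobLift; rw [Matrix.of_apply, if_pos hcond]
      rw [hd, hQ, if_neg hsj]
      have hY0 : (0 : ℝ) < Fintype.card Y := by
        exact_mod_cast Nat.lt_of_lt_of_le Nat.zero_lt_one (le_of_lt hY)
      positivity
    have hex : ∃ n, 1 ≤ n ∧ n ≤ k ∧ 0 < wordDist P π g (s n) :=
      ⟨k, hk, le_refl k, by rwa [hsk]⟩
    set n := Nat.find hex with hn
    obtain ⟨hn1, hnk, hsn⟩ := Nat.find_spec hex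
    have hbefore : ∀ j, j < n → ¬ 0 < wordDist P π g (s j) := by
      intro j hj
      rcases Nat.eq_zero_or_pos j with rfl | hj1
      · rwa [hs0]
      · intro hpos
        exact Nat.find_min hex hj ⟨hj1, le_trans (le_of_lt hj) hnk, hpos⟩
    have hpow : ∀ m, 1 ≤ m → m ≤ n → 0 < ((doobLift Q hk) ^ m) w (s m) := by
      intro m
      induction m with
      | zero => intro h; exact absurd h (by norm_num)
      | succ m ih =>
        intro _ hmn
        rcases Nat.eq_zero_or_pos m with rfl | hm1
        · rw [pow_one]
          rw [← hs0]
          exact hstep 0 (by omega) (hbefore 0 (by omega))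
        · have h1 := ih hm1 (by omega)
          have h2 := hstep m (by omega) (hbefore m (by omega))
          exact pow_entry_step hM0 h1 h2
    exact ⟨s n, n, hsn, hn1, hnk, hpow n hn1 le_rfl⟩
  refine ⟨part1, ?_⟩
  intro w hw hrecw
  obtain ⟨w', n, hw', hn1, hnk, hpos⟩ := part1 w hw
  obtain ⟨m, hm1, hm⟩ := hrecw w' ⟨n, hn1, by convert hpos using 2; congr!⟩
  have hm' : 0 < ((doobLift Q hk) ^ m) w' w := by convert hm using 2; congr!
  exact hw (reach_pos P π g Q hk hP hπ.1 hπinv hQ m w' w hw' hm')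
end
end
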